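/- arXiv:0705.0422 — 4 statements merged into one kernel-verified Lean document; each statement's English description precedes it below -/
import Mathlib

section
/- For any finite simple graph G and any integer k ≥ 1, the k-frugal chromatic number satisfies χ_k(G) ≤ ⌈λ_{k,1}(G)/k⌉. -/
open SimpleGraph

/-- A `k`-frugal colouring: a proper vertex colouring in which no colour appears more than
`k` times in the neighbourhood of any vertex. -/
def SimpleGraph.IsFrugalColoring {V α : Type*} (G : SimpleGraph V) (k : ℕ) (c : V → α) : Prop :=
  (∀ u v, G.Adj u v → c u ≠ c v) ∧
  ∀ (v : V) (a : α), {u | u ∈ G.neighborSet v ∧ c u = a}.ncard ≤ k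

/-- The `k`-frugal chromatic number `χ_k(G)`: the least number of colours in a `k`-frugal
colouring of `G`. -/
noncomputable def SimpleGraph.frugalChromaticNumber {V : Type*} (G : SimpleGraph V) (k : ℕ) : ℕ :=
  sInf {n : ℕ | ∃ c : V → ℕ, (∀ v, c v < n) ∧ G.IsFrugalColoring k c}

/-- An `L(p,q)`-labelling: labels of adjacent vertices differ by at least `p`, and labels
of vertices at distance exactly two differ by at least `q`. -/
def SimpleGraph.IsLpqLabelling {V : Type*} (G : SimpleGraph V) (p q : ℕ) (f : V → ℤ) : Prop :=
  (∀ u v, G.Adj u v → (p : ℤ) ≤ |f u - f v|) ∧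
  (∀ u v, u ≠ v → ¬ G.Adj u v → (∃ w, G.Adj u w ∧ G.Adj w v) → (q : ℤ) ≤ |f u - f v|)

/-- `λ_{p,q}(G)`: the least `t` such that `G` has an `L(p,q)`-labelling with labels
in `{1, …, t}`. -/
noncomputable def SimpleGraph.lambdaNumber {V : Type*} (G : SimpleGraph V) (p q : ℕ) : ℕ :=
  sInf {t : ℕ | ∃ f : V → ℤ, G.IsLpqLabelling p q f ∧ ∀ v, f v ∈ Finset.Icc (1 : ℤ) (t : ℤ)}

/-!
Take an optimal `L(k,1)`-labelling `f` with labels in `{1, …, λ}` and colour `v` by the block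
`⌊(f v - 1) / k⌋` of `k` consecutive labels containing `f v`; this uses `⌈λ / k⌉` colours.
Adjacent vertices have labels at distance `≥ k`, so they fall into different blocks.
Two neighbours of a common vertex are at distance at most two, so their labels differ; hence
a block of `k` labels meets each neighbourhood at most `k` times.
-/

namespace SimpleGraph

variable {V : Type*} {G : SimpleGraph V} {p q : ℕ}

lemma IsLpqLabelling.sub_const {f : V → ℤ} (hf : G.IsLpqLabelling p q f) (a : ℤ) :
    G.IsLpqLabelling p q (fun v => f v - a) := by
  simpa only [IsLpqLabelling, sub_sub_sub_cancel_right] using hf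

lemma isLpqLabelling_of_le_abs_sub {f : V → ℤ} {d : ℕ} (hp : p ≤ d) (hq : q ≤ d)
    (hf : ∀ u v, u ≠ v → (d : ℤ) ≤ |f u - f v|) : G.IsLpqLabelling p q f :=
  ⟨fun u v huv => le_trans (by exact_mod_cast hp) (hf u v (G.ne_of_adj huv)),
    fun u v huv _ _ => le_trans (by exact_mod_cast hq) (hf u v huv)⟩

lemma IsLpqLabelling.injOn_neighborSet {f : V → ℤ} (hf : G.IsLpqLabelling p q f) (hp : 0 < p)
    (hq : 0 < q) (v : V) : Set.InjOn f (G.neighborSet v) := by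
  intro u hu w hw hfuw
  by_contra huw
  have hdist : (1 : ℤ) ≤ |f u - f w| := by
    by_cases hadj : G.Adj u w
    · exact le_trans (by exact_mod_cast hp) (hf.1 u w hadj)
    · exact le_trans (by exact_mod_cast hq) (hf.2 u w huw hadj ⟨v, G.adj_symm hu, hw⟩)
  simp [hfuw] at hdist

lemma exists_isLpqLabelling [Fintype V] (G : SimpleGraph V) (p q : ℕ) :
    ∃ t : ℕ, ∃ f : V → ℤ, G.IsLpqLabelling p q f ∧ ∀ v, f v ∈ Finset.Icc (1 : ℤ) t := by
  classical
  obtain ⟨e⟩ := Fintype.truncEquivFin V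
  set d := max p q
  refine ⟨d * Fintype.card V + 1, fun v => d * (e v : ℕ) + 1,
    isLpqLabelling_of_le_abs_sub (le_max_left p q) (le_max_right p q) fun u v huv => ?_,
    fun v => ?_⟩
  · have hne : ((e u : ℕ) : ℤ) ≠ (e v : ℕ) := by
      exact_mod_cast fun h => huv (e.injective (Fin.ext h))
    have hone : (1 : ℤ) ≤ |((e u : ℕ) : ℤ) - (e v : ℕ)| := Int.one_le_abs (sub_ne_zero.2 hne)
    calc (d : ℤ) = d * 1 := (mul_one _).symm
      _ ≤ d * |((e u : ℕ) : ℤ) - (e v : ℕ)| := by gcongr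
      _ = |(d * (e u : ℕ) + 1 : ℤ) - (d * (e v : ℕ) + 1)| := by
        rw [add_sub_add_right_eq_sub, ← mul_sub, abs_mul, Nat.abs_cast]
  · have hlt : (e v : ℕ) < Fintype.card V := (e v).isLt
    simp only [Finset.mem_Icc]
    push_cast
    exact ⟨le_add_of_nonneg_left (by positivity), by gcongr⟩

lemma exists_isLpqLabelling_lambdaNumber [Fintype V] (G : SimpleGraph V) (p q : ℕ) :
    ∃ f : V → ℤ, G.IsLpqLabelling p q f ∧
      ∀ v, f v ∈ Finset.Icc (1 : ℤ) (G.lambdaNumber p q) :=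
  Nat.sInf_mem (exists_isLpqLabelling G p q)

lemma frugalChromaticNumber_le {k n : ℕ} {c : V → ℕ} (hc : G.IsFrugalColoring k c)
    (hlt : ∀ v, c v < n) : G.frugalChromaticNumber k ≤ n :=
  Nat.sInf_le ⟨c, hlt, hc⟩

lemma isFrugalColoring_div_of_isLpqLabelling {k : ℕ} {g : V → ℕ}
    (hg : G.IsLpqLabelling k q (fun v => (g v : ℤ))) (hk : 0 < k) (hq : 0 < q) :
    G.IsFrugalColoring k (fun v => g v / k) := by
  have hblock : ∀ n, n / k * k ≤ n ∧ n < n / k * k + k := fun n =>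
    ⟨Nat.div_mul_le_self n k, Nat.lt_div_mul_add hk⟩
  refine ⟨fun u v huv hc => ?_, fun v a => ?_⟩
  · have hdist : (k : ℤ) ≤ |(g u : ℤ) - g v| := hg.1 u v huv
    have hu := hblock (g u)
    have hv := hblock (g v)
    simp only at hc
    rw [hc] at hu
    generalize g v / k * k = m at hu hv
    rcases abs_cases ((g u : ℤ) - g v) with ⟨h, _⟩ | ⟨h, _⟩ <;> omega
  · calc {u | u ∈ G.neighborSet v ∧ g u / k = a}.ncard
        ≤ (↑(Finset.Ico (a * k) (a * k + k)) : Set ℕ).ncard := by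
          refine Set.ncard_le_ncard_of_injOn g (fun u hu => ?_) (fun u hu w hw h => ?_)
            (Finset.finite_toSet _)
          · have := hblock (g u)
            rw [hu.2] at this
            simpa using this
          · exact hg.injOn_neighborSet hk hq v hu.1 hw.1 (by simp [h])
      _ = k := by simp

end SimpleGraph

lemma Nat.div_lt_add_sub_one_div {n t k : ℕ} (hk : 0 < k) (hn : n < t) :
    n / k < (t + k - 1) / k := by
  rw [Nat.lt_iff_add_one_le, Nat.le_div_iff_mul_le hk, add_one_mul]
  have := Nat.div_mul_le_self n k
  omega

/-- The ceiling `⌈a/k⌉` is written `(a + k - 1)/k` in natural-number arithmetic. -/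
theorem frugalChromaticNumber_le_ceil_lambda {V : Type*} [Fintype V] (G : SimpleGraph V)
    (k : ℕ) (hk : 1 ≤ k) :
    G.frugalChromaticNumber k ≤ (G.lambdaNumber k 1 + k - 1) / k := by
  obtain ⟨f, hf, hrange⟩ := G.exists_isLpqLabelling_lambdaNumber k 1
  have hpos : ∀ v, 0 ≤ f v - 1 := fun v => sub_nonneg.2 (Finset.mem_Icc.1 (hrange v)).1
  set g : V → ℕ := fun v => (f v - 1).toNat
  have hg : G.IsLpqLabelling k 1 (fun v => (g v : ℤ)) := by
    simpa only [g, Int.toNat_of_nonneg (hpos _)] using hf.sub_const 1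
  refine frugalChromaticNumber_le (isFrugalColoring_div_of_isLpqLabelling hg hk one_pos)
    fun v => Nat.div_lt_add_sub_one_div hk ?_
  have := Finset.mem_Icc.1 (hrange v)
  simp only [g]
  omega
end

section
/- For any finite simple graph G and any integer k ≥ 1, the k-frugal choice number satisfies ch_k(G) ≤ ⌈λ^l_{k,1}(G)/k⌉. -/
/-! Blow every list entry `x` up to the block `[k x, k x + k)`, so lists of size `⌈λ/k⌉` become
lists of size at least `λ = λ^l_{k,1}(G)`. An `L(k,1)`-labelling `f` from the blown-up lists
gives the colouring `v ↦ ⌊f v / k⌋` from the original lists. It is proper because adjacent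
labels differ by at least `k`, hence lie in different blocks; and it is `k`-frugal because the
neighbours of a vertex have pairwise distinct labels, so at most `k` of them fit in one block.
A greedy choice of pairwise `k`-separated labels shows that `λ` is finite, i.e. not the junk
value `sInf ∅ = 0`. -/

open SimpleGraph

/-- The `k`-frugal choice number `ch_k(G)`: the least `t` such that any assignment of lists
of `t` integers to the vertices admits a `k`-frugal colouring from the lists. -/
noncomputable def SimpleGraph.frugalChoiceNumber {V : Type*} (G : SimpleGraph V) (k : ℕ) : ℕ :=
  sInf {t : ℕ | ∀ L : V → Finset ℤ, (∀ v, (L v).card = t) →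
    ∃ c : V → ℤ, (∀ v, c v ∈ L v) ∧ G.IsFrugalColoring k c}

/-- The list version `λ^l_{p,q}(G)`: the least `t` such that for every assignment of lists
of `t` integers to the vertices there is an `L(p,q)`-labelling from the lists. -/
noncomputable def SimpleGraph.lambdaListNumber {V : Type*} (G : SimpleGraph V) (p q : ℕ) : ℕ :=
  sInf {t : ℕ | ∀ L : V → Finset ℤ, (∀ v, (L v).card = t) →
    ∃ f : V → ℤ, G.IsLpqLabelling p q f ∧ ∀ v, f v ∈ L v}

open Finset

theorem Finset.exists_separated_choice {ι : Type*} [DecidableEq ι] (k : ℕ) (L : ι → Finset ℤ)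
    (s : Finset ι) (hL : ∀ i ∈ s, (2 * k - 1) * #s < #(L i)) :
    ∃ f : ι → ℤ, (∀ i ∈ s, f i ∈ L i) ∧ (s : Set ι).Pairwise fun i j => (k : ℤ) ≤ |f i - f j| := by
  induction s using Finset.induction_on with
  | empty => exact ⟨0, by simp, by simp⟩
  | insert a s ha ih =>
    rw [card_insert_of_notMem ha] at hL
    obtain ⟨f, hfL, hfs⟩ :=
      ih fun i hi => lt_of_le_of_lt (by gcongr; omega) (hL i (mem_insert_of_mem hi))
    have hforbidden : #(s.biUnion fun j => Ioo (f j - k) (f j + k)) < #(L a) :=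
      calc #(s.biUnion fun j => Ioo (f j - k) (f j + k))
          ≤ #s * (2 * k - 1) :=
            card_biUnion_le_card_mul _ _ _ fun j _ => by simp [Int.card_Ioo]; omega
        _ < #(L a) := lt_of_le_of_lt (by rw [mul_comm]; gcongr; omega) (hL a (mem_insert_self a s))
    obtain ⟨x, hxL, hx⟩ := exists_mem_notMem_of_card_lt_card hforbidden
    have hfar : ∀ j ∈ s, (k : ℤ) ≤ |x - f j| := fun j hj => by
      by_contra! h
      rw [abs_sub_lt_iff] at h
      exact hx (mem_biUnion.2 ⟨j, hj, mem_Ioo.2 ⟨by omega, by omega⟩⟩)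
    have hupdate : ∀ j ∈ s, Function.update f a x j = f j := fun j hj =>
      Function.update_of_ne (ne_of_mem_of_not_mem hj ha) _ _
    refine ⟨Function.update f a x, ?_, ?_⟩
    · simpa [forall_mem_insert, hxL] using fun i hi => hupdate i hi ▸ hfL i hi
    · rw [coe_insert, Set.pairwise_insert]
      refine ⟨fun i hi j hj hij => ?_, fun j hj _ => ?_⟩
      · simpa only [hupdate i hi, hupdate j hj] using hfs hi hj hij
      · rw [hupdate j hj, Function.update_self, abs_sub_comm (f j)]; exact ⟨hfar j hj, hfar j hj⟩

theorem SimpleGraph.isLpqLabelling_of_pairwise {V : Type*} (G : SimpleGraph V) {p q : ℕ}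
    (hqp : q ≤ p) {f : V → ℤ} (hf : Pairwise fun u v => (p : ℤ) ≤ |f u - f v|) :
    G.IsLpqLabelling p q f :=
  ⟨fun _ _ h => hf h.ne, fun _ _ h _ _ => le_trans (by exact_mod_cast hqp) (hf h)⟩

theorem SimpleGraph.exists_isLpqLabelling_of_card_eq_lambdaListNumber {V : Type*} [Fintype V]
    (G : SimpleGraph V) {p q : ℕ} (hqp : q ≤ p) (L : V → Finset ℤ)
    (hL : ∀ v, #(L v) = G.lambdaListNumber p q) :
    ∃ f : V → ℤ, G.IsLpqLabelling p q f ∧ ∀ v, f v ∈ L v := by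
  classical
  refine (Nat.sInf_mem ⟨(2 * p - 1) * Fintype.card V + 1, fun L hL => ?_⟩ :
    G.lambdaListNumber p q ∈ _) L hL
  obtain ⟨f, hfL, hf⟩ := exists_separated_choice p L univ fun v _ => by rw [hL, card_univ]; omega
  exact ⟨f, G.isLpqLabelling_of_pairwise hqp (Set.pairwise_univ.1 (by simpa using hf)),
    fun v => hfL v (mem_univ v)⟩

theorem Int.abs_sub_lt_of_ediv_eq {a b k : ℤ} (hk : 0 < k) (h : a / k = b / k) : |a - b| < k := by
  have ha := (Int.ediv_eq_iff_of_pos hk).1 h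
  have hb := (Int.ediv_eq_iff_of_pos hk).1 (rfl : b / k = b / k)
  rw [abs_sub_lt_iff]; constructor <;> linarith

noncomputable def blowUp (k : ℕ) (s : Finset ℤ) : Finset ℤ :=
  s.biUnion fun x => Ico (x * k) (x * k + k)

theorem mem_blowUp {k : ℕ} (hk : 0 < k) {s : Finset ℤ} {y : ℤ} : y ∈ blowUp k s ↔ y / k ∈ s := by
  simp [blowUp, ← Int.ediv_eq_iff_of_pos (Int.natCast_pos.2 hk)]

theorem card_blowUp {k : ℕ} (hk : 0 < k) (s : Finset ℤ) : #(blowUp k s) = #s * k := by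
  rw [blowUp, card_biUnion, sum_const_nat (m := k) fun x _ => by simp [Int.card_Ico]]
  refine fun x _ x' _ hxx' => Finset.disjoint_left.2 fun y hy hy' => hxx' ?_
  rw [mem_Ico, ← Int.ediv_eq_iff_of_pos (Int.natCast_pos.2 hk)] at hy hy'
  exact hy.symm.trans hy'

namespace SimpleGraph.IsLpqLabelling

variable {V : Type*} {G : SimpleGraph V} {p q : ℕ} {f : V → ℤ}

theorem injOn_neighborSet_s3 (hf : G.IsLpqLabelling p q f) (hp : 1 ≤ p) (hq : 1 ≤ q) (v : V) :
    Set.InjOn f (G.neighborSet v) := by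
  intro u hu u' hu' hfu
  by_contra hne
  by_cases hadj : G.Adj u u'
  · have := hf.1 u u' hadj
    rw [hfu, sub_self, abs_zero] at this
    omega
  · have := hf.2 u u' hne hadj ⟨v, hu.symm, hu'⟩
    rw [hfu, sub_self, abs_zero] at this
    omega

theorem isFrugalColoring_ediv {k : ℕ} (hf : G.IsLpqLabelling k q f) (hk : 0 < k) (hq : 1 ≤ q) :
    G.IsFrugalColoring k fun v => f v / k := by
  have hk' : (0 : ℤ) < k := Int.natCast_pos.2 hk
  refine ⟨fun u v huv hc => (hf.1 u v huv).not_gt (Int.abs_sub_lt_of_ediv_eq hk' hc), fun v a => ?_⟩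
  calc {u | u ∈ G.neighborSet v ∧ f u / k = a}.ncard
      ≤ (Set.Ico (a * k) (a * k + k)).ncard :=
        Set.ncard_le_ncard_of_injOn f (fun u hu => (Int.ediv_eq_iff_of_pos hk').1 hu.2)
          ((hf.injOn_neighborSet_s3 hk hq v).mono fun _ hu => hu.1) (Set.finite_Ico _ _)
    _ = k := by rw [← coe_Ico, Set.ncard_coe_finset, Int.card_Ico]; simp

end SimpleGraph.IsLpqLabelling

/-- The ceiling `⌈a/k⌉` is written `(a + k - 1)/k` in natural-number arithmetic. -/
theorem frugalChoiceNumber_le_ceil_lambdaList {V : Type*} [Fintype V] (G : SimpleGraph V)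
    (k : ℕ) (hk : 1 ≤ k) :
    G.frugalChoiceNumber k ≤ (G.lambdaListNumber k 1 + k - 1) / k := by
  refine Nat.sInf_le fun L hL => ?_
  have hcard : ∀ v, G.lambdaListNumber k 1 ≤ #(blowUp k (L v)) := fun v => by
    rw [card_blowUp hk, hL]
    have := Nat.lt_div_mul_add (a := G.lambdaListNumber k 1 + k - 1) hk
    omega
  choose L' hL'sub hL'card using fun v => exists_subset_card_eq (hcard v)
  obtain ⟨f, hf, hfL'⟩ := G.exists_isLpqLabelling_of_card_eq_lambdaListNumber hk L' hL'card
  exact ⟨fun v => f v / k, fun v => (mem_blowUp hk).1 (hL'sub v (hfL' v)),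
    hf.isFrugalColoring_ediv hk le_rfl⟩
end

section
/- Let G be a finite multigraph (multiple edges allowed, no loops) and let k be an even positive integer. Then χ'_k(G) = ch'_k(G) = ⌈Δ(G)/k⌉. -/
open SimpleGraph

/-- A multigraph on vertex type `V` with edge index type `E`: each edge has a pair of
distinct endpoints (no loops); several edges may share the same endpoints. -/
structure Multigraph (V : Type*) (E : Type*) where
  ends : E → Sym2 V
  no_loops : ∀ e, ¬ (ends e).IsDiag

/-- The degree of a vertex of a multigraph: the number of edges incident with it. -/
noncomputable def Multigraph.degree {V E : Type*} (G : Multigraph V E) (v : V) : ℕ :=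
  {e : E | v ∈ G.ends e}.ncard

/-- The maximum degree `Δ(G)` of a multigraph. -/
noncomputable def Multigraph.maxDegree {V E : Type*} [Fintype V] (G : Multigraph V E) : ℕ :=
  Finset.univ.sup fun v => G.degree v

/-- A `k`-frugal edge colouring: no colour appears more than `k` times on the edges
incident with any vertex. -/
def Multigraph.IsFrugalEdgeColoring {V E α : Type*} (G : Multigraph V E) (k : ℕ)
    (c : E → α) : Prop :=
  ∀ (v : V) (a : α), {e : E | v ∈ G.ends e ∧ c e = a}.ncard ≤ k

/-- The `k`-frugal chromatic index `χ'_k(G)`: the least number of colours in a `k`-frugal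
edge colouring of `G`. -/
noncomputable def Multigraph.frugalChromaticIndex {V E : Type*} (G : Multigraph V E)
    (k : ℕ) : ℕ :=
  sInf {n : ℕ | ∃ c : E → ℕ, (∀ e, c e < n) ∧ G.IsFrugalEdgeColoring k c}

/-- The `k`-frugal edge choice number `ch'_k(G)`: the least `t` such that every assignment
of lists of `t` colours to the edges admits a `k`-frugal edge colouring from the lists. -/
noncomputable def Multigraph.frugalEdgeChoiceNumber {V E : Type*} (G : Multigraph V E)
    (k : ℕ) : ℕ :=
  sInf {t : ℕ | ∀ L : E → Finset ℤ, (∀ e, (L e).card = t) →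
    ∃ c : E → ℤ, (∀ e, c e ∈ L e) ∧ G.IsFrugalEdgeColoring k c}

/-!
The lower bound is counting: a vertex of degree `Δ` meets at most `k` edges of each colour.

For the upper bound write `k = 2s` and `t = ⌈Δ/k⌉`. Orient `G` so that every vertex `v` has in- and
out-degree at most `⌈d(v)/2⌉ ≤ st`: join the odd vertices in pairs by new edges, and then let every
vertex receive exactly half of its edges, which Hall's theorem allows. Splitting every vertex into a
tail copy and a head copy turns `G` into a bipartite multigraph of maximum degree at most `st`.
Given lists `L e` of `t` colours, Galvin's theorem colours this bipartite multigraph properly from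
the lists `L e × {0, …, s - 1}` of `st` colours; forgetting the second coordinate, every colour then
appears at most `s` times at each copy, so at most `2s = k` times at each vertex of `G`.

Galvin's theorem is proved by the kernel method, for the orientation of the line graph induced by
a proper König colouring; the König colouring peels off matchings covering all vertices of maximum
degree, found by Hall's theorem in the biadjacency matrix padded to a regular one.
-/

open Finset

theorem exists_perm_forall_pos_of_sum_eq {n : Type*} [Fintype n] [DecidableEq n]
    (M : n → n → ℕ) {r : ℕ} (hr : 0 < r) (hrow : ∀ i, ∑ j, M i j = r)
    (hcol : ∀ j, ∑ i, M i j = r) : ∃ σ : Equiv.Perm n, ∀ i, 0 < M i (σ i) := by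
  let support (i : n) : Finset n := {j | 0 < M i j}
  have hall (A : Finset n) : #A ≤ #(A.biUnion support) := by
    have hrow' : ∀ i ∈ A, ∑ j ∈ A.biUnion support, M i j = r := fun i hi => by
      rw [← hrow i]
      refine sum_subset (subset_univ _) fun j _ hj => ?_
      by_contra h
      exact hj (mem_biUnion.2 ⟨i, hi, by simpa [support] using Nat.pos_of_ne_zero h⟩)
    refine le_of_mul_le_mul_right ?_ hr
    calc #A * r = ∑ i ∈ A, ∑ j ∈ A.biUnion support, M i j := by
          rw [sum_congr rfl hrow', sum_const, smul_eq_mul]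
      _ ≤ ∑ i, ∑ j ∈ A.biUnion support, M i j := sum_le_sum_of_subset (subset_univ _)
      _ = #(A.biUnion support) * r := by
          rw [sum_comm, sum_congr rfl fun j _ => hcol j, sum_const, smul_eq_mul]
  obtain ⟨g, hg, hgM⟩ := (all_card_le_biUnion_card_iff_exists_injective support).1 hall
  exact ⟨Equiv.ofBijective g (Finite.injective_iff_bijective.1 hg),
    fun i => by simpa [support] using hgM i⟩

theorem injOn_prodMk_ite {F Z β : Type*} [DecidableEq F] {g : F → Z} {c : F → β} {a : β}
    {H K : Finset F} (hK : Set.InjOn g K) (hc : ∀ e ∈ H \ K, c e ≠ a)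
    (hinj : Set.InjOn (fun e => (g e, c e)) ↑(H \ K)) :
    Set.InjOn (fun e => (g e, if e ∈ K then a else c e)) H := by
  intro e he f hf h
  have he' : e ∈ K ∨ e ∈ H \ K := by by_cases e ∈ K <;> simp_all
  have hf' : f ∈ K ∨ f ∈ H \ K := by by_cases f ∈ K <;> simp_all
  simp only [Prod.mk.injEq] at h
  rcases he' with heK | heK <;> rcases hf' with hfK | hfK
  · exact hK heK hfK h.1
  · simp [heK, (mem_sdiff.1 hfK).2] at h
    exact absurd h.2.symm (hc f hfK)
  · simp [hfK, (mem_sdiff.1 heK).2] at h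
    exact absurd h.2 (hc e heK)
  · simp [(mem_sdiff.1 heK).2, (mem_sdiff.1 hfK).2] at h
    exact hinj heK hfK (Prod.ext h.1 h.2)

theorem card_filter_sdiff_le {F Z : Type*} [DecidableEq F] [DecidableEq Z] {g : F → Z}
    {s M : Finset F} {z : Z} {D : ℕ} (h : #{e ∈ s | g e = z} ≤ D + 1)
    (hcov : #{e ∈ s | g e = z} = D + 1 → ∃ e ∈ M, e ∈ s ∧ g e = z) :
    #{e ∈ s \ M | g e = z} ≤ D := by
  by_cases hfull : #{e ∈ s | g e = z} = D + 1
  · obtain ⟨e₀, he₀M, he₀s, he₀z⟩ := hcov hfull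
    have hsub : {e ∈ s \ M | g e = z} ⊆ {e ∈ s | g e = z}.erase e₀ := by
      intro e
      simp only [mem_filter, mem_sdiff, mem_erase]
      rintro ⟨⟨hs, hM⟩, hz⟩
      exact ⟨by rintro rfl; exact hM he₀M, hs, hz⟩
    have := card_le_card hsub
    rw [card_erase_of_mem (by simp [he₀s, he₀z])] at this
    omega
  · have := card_le_card (filter_subset_filter (fun e => g e = z) (sdiff_subset : s \ M ⊆ s))
    omega

section Bipartite

/-! A bipartite multigraph is an edge type `F` with endpoint maps `tl : F → X` and `hd : F → Y`;
a colouring `c` of (a set of) its edges is proper when `e ↦ (tl e, c e)` and `e ↦ (hd e, c e)`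
are injective (on that set). -/

variable {F X Y β : Type*} (tl : F → X) (hd : F → Y)

theorem exists_matching_of_perm [Fintype X] [Fintype Y] (s : Finset F) (σ : Equiv.Perm (X ⊕ Y))
    (hσ : ∀ x y, σ (.inl x) = .inr y → ∃ e ∈ s, tl e = x ∧ hd e = y) :
    ∃ M ⊆ s, Set.InjOn tl M ∧ Set.InjOn hd M ∧
      ∀ x y, σ (.inl x) = .inr y → ∃ e ∈ M, tl e = x ∧ hd e = y := by
  classical
  have hedge (p : {p : X × Y // σ (.inl p.1) = .inr p.2}) :
      ∃ e ∈ s, tl e = p.1.1 ∧ hd e = p.1.2 := hσ _ _ p.2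
  choose ε hεs hεtl hεhd using hedge
  have hpair {p q : {p : X × Y // σ (.inl p.1) = .inr p.2}} (h : p.1.1 = q.1.1 ∨ p.1.2 = q.1.2) :
      p = q := by
    have hp := p.2
    rcases h with h | h
    · rw [h, q.2, Sum.inr.injEq] at hp
      exact Subtype.ext (Prod.ext h hp.symm)
    · rw [h, ← q.2, σ.injective.eq_iff, Sum.inl.injEq] at hp
      exact Subtype.ext (Prod.ext hp h)
  refine ⟨univ.image ε, image_subset_iff.2 fun p _ => hεs p, ?_, ?_, fun x y hxy =>
    ⟨ε ⟨(x, y), hxy⟩, mem_image_of_mem _ (mem_univ _), hεtl _, hεhd _⟩⟩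
  · simp only [coe_image, coe_univ, Set.image_univ, Set.InjOn, Set.mem_range]
    rintro _ ⟨p, rfl⟩ _ ⟨q, rfl⟩ h
    rw [hpair (.inl ((hεtl p).symm.trans (h.trans (hεtl q))))]
  · simp only [coe_image, coe_univ, Set.image_univ, Set.InjOn, Set.mem_range]
    rintro _ ⟨p, rfl⟩ _ ⟨q, rfl⟩ h
    rw [hpair (.inr ((hεhd p).symm.trans (h.trans (hεhd q))))]

/-- The biadjacency matrix of `s`, indexed by `X ⊕ Y` on both sides so that it is symmetric, with
the degree deficits `D - d(v)` on the diagonal. -/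
def paddedBiadjacency [DecidableEq X] [DecidableEq Y] (s : Finset F) (D : ℕ) :
    X ⊕ Y → X ⊕ Y → ℕ :=
  Matrix.fromBlocks (Matrix.diagonal fun x => D - #{e ∈ s | tl e = x})
    (Matrix.of fun x y => #{e ∈ s | tl e = x ∧ hd e = y})
    (Matrix.of fun y x => #{e ∈ s | tl e = x ∧ hd e = y})
    (Matrix.diagonal fun y => D - #{e ∈ s | hd e = y})

section PaddedBiadjacency

variable [DecidableEq X] [DecidableEq Y] (s : Finset F) (D : ℕ)

theorem paddedBiadjacency_comm (i j : X ⊕ Y) :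
    paddedBiadjacency tl hd s D i j = paddedBiadjacency tl hd s D j i := by
  rcases i with x | y <;> rcases j with x' | y' <;>
    simp [paddedBiadjacency, Matrix.diagonal_apply, eq_comm] <;> split_ifs <;> simp_all

theorem sum_paddedBiadjacency [Fintype X] [Fintype Y] (hX : ∀ x, #{e ∈ s | tl e = x} ≤ D)
    (hY : ∀ y, #{e ∈ s | hd e = y} ≤ D) (i : X ⊕ Y) :
    ∑ j, paddedBiadjacency tl hd s D i j = D := by
  have hcntX (x : X) : ∑ y, #{e ∈ s | tl e = x ∧ hd e = y} = #{e ∈ s | tl e = x} := by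
    rw [card_eq_sum_card_fiberwise (f := hd) (t := univ) fun _ _ => mem_univ _]
    simp only [filter_filter]
  have hcntY (y : Y) : ∑ x, #{e ∈ s | tl e = x ∧ hd e = y} = #{e ∈ s | hd e = y} := by
    rw [card_eq_sum_card_fiberwise (f := tl) (t := univ) fun _ _ => mem_univ _]
    simp only [filter_filter, and_comm]
  rcases i with x | y
  · simp [paddedBiadjacency, Fintype.sum_sum_type, Matrix.diagonal_apply, hcntX,
      Nat.sub_add_cancel (hX x)]
  · simp [paddedBiadjacency, Fintype.sum_sum_type, Matrix.diagonal_apply, hcntY,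
      Nat.add_sub_cancel' (hY y)]

end PaddedBiadjacency

theorem exists_matching_covering_max_degree [Fintype X] [Fintype Y] [DecidableEq X]
    [DecidableEq Y] (s : Finset F) {D : ℕ} (hD : 0 < D)
    (hX : ∀ x, #{e ∈ s | tl e = x} ≤ D) (hY : ∀ y, #{e ∈ s | hd e = y} ≤ D) :
    ∃ M ⊆ s, Set.InjOn tl M ∧ Set.InjOn hd M ∧
      (∀ x, #{e ∈ s | tl e = x} = D → ∃ e ∈ M, tl e = x) ∧
      (∀ y, #{e ∈ s | hd e = y} = D → ∃ e ∈ M, hd e = y) := by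
  have hrow := sum_paddedBiadjacency tl hd s D hX hY
  obtain ⟨σ, hσ⟩ := exists_perm_forall_pos_of_sum_eq _ hD hrow fun j => by
    simpa only [paddedBiadjacency_comm] using hrow j
  obtain ⟨M, hMs, hMtl, hMhd, hMσ⟩ := exists_matching_of_perm tl hd s σ fun x y hxy => by
    simpa [hxy, paddedBiadjacency, card_pos, Finset.Nonempty] using hσ (.inl x)
  refine ⟨M, hMs, hMtl, hMhd, fun x hx => ?_, fun y hy => ?_⟩
  · have hpos := hσ (.inl x)
    rcases hσx : σ (.inl x) with x' | y
    · rw [hσx] at hpos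
      by_cases h : x = x'
      · subst h
        simp [paddedBiadjacency, hx] at hpos
      · simp [paddedBiadjacency, Matrix.diagonal_apply_ne _ h] at hpos
    · obtain ⟨e, heM, he, -⟩ := hMσ x y hσx
      exact ⟨e, heM, he⟩
  · obtain ⟨i, hi⟩ := σ.surjective (.inr y)
    have hpos := hσ i
    rcases i with x | y'
    · obtain ⟨e, heM, -, he⟩ := hMσ x y hi
      exact ⟨e, heM, he⟩
    · rw [hi] at hpos
      by_cases h : y' = y
      · subst h
        simp [paddedBiadjacency, hy] at hpos
      · simp [paddedBiadjacency, Matrix.diagonal_apply_ne _ h] at hpos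

theorem exists_proper_edge_coloring [Fintype X] [Fintype Y] [DecidableEq F] [DecidableEq X]
    [DecidableEq Y] (D : ℕ) (s : Finset F) (hX : ∀ x, #{e ∈ s | tl e = x} ≤ D)
    (hY : ∀ y, #{e ∈ s | hd e = y} ≤ D) :
    ∃ φ : F → ℕ, (∀ e ∈ s, φ e < D) ∧ Set.InjOn (fun e => (tl e, φ e)) s ∧
      Set.InjOn (fun e => (hd e, φ e)) s := by
  induction D generalizing s with
  | zero =>
    obtain rfl : s = ∅ := eq_empty_of_forall_notMem fun e he =>
      (hX (tl e)).not_gt (card_pos.2 ⟨e, mem_filter.2 ⟨he, rfl⟩⟩)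
    simp
  | succ D ih =>
    obtain ⟨M, hMs, hMtl, hMhd, hcovX, hcovY⟩ :=
      exists_matching_covering_max_degree tl hd s D.succ_pos hX hY
    obtain ⟨ψ, hψD, hψtl, hψhd⟩ := ih (s \ M)
      (fun x => card_filter_sdiff_le (hX x) fun h => by
        obtain ⟨e, he, rfl⟩ := hcovX x h; exact ⟨e, he, hMs he, rfl⟩)
      (fun y => card_filter_sdiff_le (hY y) fun h => by
        obtain ⟨e, he, rfl⟩ := hcovY y h; exact ⟨e, he, hMs he, rfl⟩)
    have hψne : ∀ e ∈ s \ M, ψ e ≠ D := fun e he => (hψD e he).ne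
    refine ⟨fun e => if e ∈ M then D else ψ e, fun e he => ?_,
      injOn_prodMk_ite hMtl hψne hψtl, injOn_prodMk_ite hMhd hψne hψhd⟩
    by_cases heM : e ∈ M
    · simp [heM]
    · simpa [heM] using (hψD e (mem_sdiff.2 ⟨he, heM⟩)).trans D.lt_succ_self

variable (φ : F → ℕ)

def GalvinArc (e f : F) : Prop :=
  (tl e = tl f ∧ φ e < φ f) ∨ (hd e = hd f ∧ φ f < φ e)

instance [DecidableEq X] [DecidableEq Y] : DecidableRel (GalvinArc tl hd φ) :=
  fun _ _ => inferInstanceAs (Decidable (_ ∨ _))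

def IsKernel [DecidableEq F] (H K : Finset F) : Prop :=
  K ⊆ H ∧ Set.InjOn tl K ∧ Set.InjOn hd K ∧ ∀ e ∈ H \ K, ∃ f ∈ K, GalvinArc tl hd φ e f

variable {tl hd φ}

theorem IsKernel.of_erase [DecidableEq F] {H K : Finset F} {e f : F}
    (hK : IsKernel tl hd φ (H.erase f) K) (heH : e ∈ H)
    (hmax : ∀ g ∈ H, tl g = tl e → φ g ≤ φ e) (hhd : hd e = hd f) (hlt : φ e < φ f) :
    IsKernel tl hd φ H K := by
  obtain ⟨hKH, hKtl, hKhd, hKarc⟩ := hK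
  refine ⟨hKH.trans (erase_subset _ _), hKtl, hKhd, fun g hg => ?_⟩
  obtain ⟨hgH, hgK⟩ := mem_sdiff.1 hg
  by_cases hgf : g = f
  · subst hgf
    by_cases heK : e ∈ K
    · exact ⟨e, heK, .inr ⟨hhd.symm, hlt⟩⟩
    obtain ⟨w, hwK, hw | hw⟩ := hKarc e (mem_sdiff.2 ⟨mem_erase.2 ⟨hlt.ne ∘ congrArg φ, heH⟩, heK⟩)
    · exact absurd (hmax w (mem_of_mem_erase (hKH hwK)) hw.1.symm) hw.2.not_ge
    · exact ⟨w, hwK, .inr ⟨hhd.symm.trans hw.1, hw.2.trans hlt⟩⟩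
  · exact hKarc g (mem_sdiff.2 ⟨mem_erase.2 ⟨hgf, hgH⟩, hgK⟩)

theorem exists_isKernel [DecidableEq F] (hφtl : Function.Injective fun e => (tl e, φ e))
    (hφhd : Function.Injective fun e => (hd e, φ e)) (H : Finset F) :
    ∃ K, IsKernel tl hd φ H K := by
  classical
  induction H using Finset.strongInduction with | H H ih =>
  set S := {e ∈ H | ∀ f ∈ H, tl f = tl e → φ f ≤ φ e}
  have hSmax (e : F) (he : e ∈ H) : ∃ b ∈ S, tl b = tl e ∧ φ e ≤ φ b := by
    obtain ⟨b, hb, hbmax⟩ := exists_max_image {f ∈ H | tl f = tl e} φ ⟨e, mem_filter.2 ⟨he, rfl⟩⟩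
    obtain ⟨hbH, hbe⟩ := mem_filter.1 hb
    exact ⟨b, mem_filter.2 ⟨hbH, fun f hf hfb => hbmax f (mem_filter.2 ⟨hf, hfb.trans hbe⟩)⟩,
      hbe, hbmax e (mem_filter.2 ⟨he, rfl⟩)⟩
  have hStl : Set.InjOn tl S := fun e he f hf h => hφtl (Prod.ext h
    ((mem_filter.1 he).2 f (mem_filter.1 hf).1 h.symm |>.antisymm'
      ((mem_filter.1 hf).2 e (mem_filter.1 he).1 h)))
  by_cases hShd : Set.InjOn hd S
  · refine ⟨S, filter_subset _ _, hStl, hShd, fun e he => ?_⟩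
    obtain ⟨heH, heS⟩ := mem_sdiff.1 he
    obtain ⟨b, hbS, hbe, hle⟩ := hSmax e heH
    refine ⟨b, hbS, .inl ⟨hbe.symm, hle.lt_of_ne fun h => heS ?_⟩⟩
    rwa [hφtl (Prod.ext hbe.symm h)]
  simp only [Set.InjOn, not_forall] at hShd
  obtain ⟨e, heS, f, hfS, hef, hne⟩ := hShd
  have hφef : φ e ≠ φ f := fun h => hne (hφhd (Prod.ext hef h))
  have hSH : S ⊆ H := filter_subset _ _
  rcases hφef.lt_or_gt with hlt | hlt
  · obtain ⟨K, hK⟩ := ih (H.erase f) (erase_ssubset (hSH hfS))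
    exact ⟨K, hK.of_erase (hSH heS) (mem_filter.1 heS).2 hef hlt⟩
  · obtain ⟨K, hK⟩ := ih (H.erase e) (erase_ssubset (hSH heS))
    exact ⟨K, hK.of_erase (hSH hfS) (mem_filter.1 hfS).2 hef.symm hlt⟩

theorem card_arcs_sdiff_lt_card_erase [DecidableEq F] [DecidableEq X] [DecidableEq Y]
    [DecidableEq β] {H K : Finset F} {L : F → Finset β} {a : β}
    (hK : IsKernel tl hd φ {e ∈ H | a ∈ L e} K) {e : F} (he : e ∈ H \ K)
    (hL : #{f ∈ H | GalvinArc tl hd φ e f} < #(L e)) :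
    #{f ∈ H \ K | GalvinArc tl hd φ e f} < #((L e).erase a) := by
  have hsub : {f ∈ H \ K | GalvinArc tl hd φ e f} ⊆ {f ∈ H | GalvinArc tl hd φ e f} :=
    filter_subset_filter _ sdiff_subset
  by_cases hea : a ∈ L e
  · obtain ⟨heH, heK⟩ := mem_sdiff.1 he
    obtain ⟨f₀, hf₀K, harc⟩ := hK.2.2.2 e (mem_sdiff.2 ⟨mem_filter.2 ⟨heH, hea⟩, heK⟩)
    have hf₀ : f₀ ∈ {f ∈ H | GalvinArc tl hd φ e f} :=
      mem_filter.2 ⟨(mem_filter.1 (hK.1 hf₀K)).1, harc⟩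
    have hsub' : {f ∈ H \ K | GalvinArc tl hd φ e f} ⊆ {f ∈ H | GalvinArc tl hd φ e f}.erase f₀ :=
      fun f hf => mem_erase.2 ⟨fun h => (mem_sdiff.1 (mem_filter.1 hf).1).2 (h ▸ hf₀K), hsub hf⟩
    have := card_le_card hsub'
    rw [card_erase_of_mem hf₀] at this
    rw [card_erase_of_mem hea]
    have := card_pos.2 ⟨f₀, hf₀⟩
    omega
  · rw [erase_eq_of_notMem hea]
    exact (card_le_card hsub).trans_lt hL

theorem exists_list_coloring_of_card_arcs_lt [DecidableEq F] [DecidableEq X] [DecidableEq Y]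
    [DecidableEq β] [Nonempty β] (hφtl : Function.Injective fun e => (tl e, φ e))
    (hφhd : Function.Injective fun e => (hd e, φ e)) (H : Finset F) (L : F → Finset β)
    (hL : ∀ e ∈ H, #{f ∈ H | GalvinArc tl hd φ e f} < #(L e)) :
    ∃ c : F → β, (∀ e ∈ H, c e ∈ L e) ∧ Set.InjOn (fun e => (tl e, c e)) H ∧
      Set.InjOn (fun e => (hd e, c e)) H := by
  induction H using Finset.strongInduction generalizing L with | H H ih =>
  obtain rfl | ⟨e₀, he₀⟩ := H.eq_empty_or_nonempty
  · exact ⟨fun _ => Classical.arbitrary β, by simp, by simp, by simp⟩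
  obtain ⟨a, ha⟩ := card_pos.1 ((Nat.zero_le _).trans_lt (hL e₀ he₀))
  -- colour a kernel of the edges whose list contains `a` with `a`, and recurse on the rest
  obtain ⟨K, hK⟩ := exists_isKernel hφtl hφhd {e ∈ H | a ∈ L e}
  have hKH : K ⊆ H := hK.1.trans (filter_subset _ _)
  have hKne : K.Nonempty := by
    by_cases he₀K : e₀ ∈ K
    · exact ⟨e₀, he₀K⟩
    · obtain ⟨f, hf, -⟩ := hK.2.2.2 e₀ (mem_sdiff.2 ⟨mem_filter.2 ⟨he₀, ha⟩, he₀K⟩)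
      exact ⟨f, hf⟩
  obtain ⟨c, hcL, hctl, hchd⟩ := ih (H \ K) (sdiff_ssubset hKH hKne) (fun e => (L e).erase a)
    fun e he => card_arcs_sdiff_lt_card_erase hK he (hL e (mem_sdiff.1 he).1)
  have hca : ∀ e ∈ H \ K, c e ≠ a := fun e he => (mem_erase.1 (hcL e he)).1
  refine ⟨fun e => if e ∈ K then a else c e, fun e he => ?_,
    injOn_prodMk_ite hK.2.1 hca hctl, injOn_prodMk_ite hK.2.2.1 hca hchd⟩
  by_cases heK : e ∈ K
  · simpa [heK] using (mem_filter.1 (hK.1 heK)).2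
  · simpa [heK] using mem_of_mem_erase (hcL e (mem_sdiff.2 ⟨he, heK⟩))

theorem card_arcs_lt [Fintype F] [DecidableEq X] [DecidableEq Y] {D : ℕ} (hφD : ∀ e, φ e < D)
    (hφtl : Function.Injective fun e => (tl e, φ e))
    (hφhd : Function.Injective fun e => (hd e, φ e)) (e : F) :
    #{f | GalvinArc tl hd φ e f} < D := by
  classical
  have htl : #{f | tl e = tl f ∧ φ e < φ f} ≤ #(Ioo (φ e) D) :=
    card_le_card_of_injOn φ (fun f hf => by simp_all [hφD f])
      fun f hf g hg h => hφtl (Prod.ext (by simp_all) h)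
  have hhd : #{f | hd e = hd f ∧ φ f < φ e} ≤ #(range (φ e)) :=
    card_le_card_of_injOn φ (fun f hf => by simp_all)
      fun f hf g hg h => hφhd (Prod.ext (by simp_all) h)
  have hcard : #{f | GalvinArc tl hd φ e f} ≤
      #{f | tl e = tl f ∧ φ e < φ f} + #{f | hd e = hd f ∧ φ f < φ e} :=
    (card_le_card fun f hf => by simpa [GalvinArc] using (mem_filter.1 hf).2).trans
      (card_union_le _ _)
  rw [Nat.card_Ioo, card_range] at *
  have := hφD e
  omega

theorem exists_list_edge_coloring [Fintype F] [Fintype X] [Fintype Y] [DecidableEq F]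
    [DecidableEq X] [DecidableEq Y] [DecidableEq β] [Nonempty β] {D : ℕ}
    (hX : ∀ x, #{e | tl e = x} ≤ D) (hY : ∀ y, #{e | hd e = y} ≤ D) (L : F → Finset β)
    (hL : ∀ e, D ≤ #(L e)) :
    ∃ c : F → β, (∀ e, c e ∈ L e) ∧ Function.Injective (fun e => (tl e, c e)) ∧
      Function.Injective (fun e => (hd e, c e)) := by
  obtain ⟨φ, hφD, hφtl, hφhd⟩ := exists_proper_edge_coloring tl hd D univ hX hY
  rw [coe_univ, Set.injOn_univ] at hφtl hφhd
  obtain ⟨c, hcL, hctl, hchd⟩ := exists_list_coloring_of_card_arcs_lt hφtl hφhd univ L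
    fun e _ => (card_arcs_lt (fun e => hφD e (mem_univ e)) hφtl hφhd e).trans_le (hL e)
  rw [coe_univ, Set.injOn_univ] at hctl hchd
  exact ⟨c, fun e => hcL e (mem_univ e), hctl, hchd⟩

end Bipartite

theorem card_filter_fst_le {F Z α γ : Type*} [Fintype F] [DecidableEq Z] [DecidableEq α]
    {g : F → Z} {c : F → α × γ} {T : Finset γ} (hc : ∀ e, (c e).2 ∈ T)
    (hinj : Function.Injective fun e => (g e, c e)) (z : Z) (a : α) :
    #{e | g e = z ∧ (c e).1 = a} ≤ #T :=
  card_le_card_of_injOn (fun e => (c e).2) (fun e _ => hc e) fun e he f hf h => hinj <| by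
    simp only [coe_filter, mem_univ, true_and, Set.mem_ofPred_eq] at he hf
    exact Prod.ext (he.1.trans hf.1.symm) (Prod.ext (he.2.trans hf.2.symm) h)

theorem card_filter_some_le {E : Type*} [Fintype E] (p : Option E → Prop) [DecidablePred p] :
    #{e | p (some e)} ≤ #{o | p o} :=
  card_le_card_of_injOn some (fun e he => by simpa using he) (Option.some_injective E).injOn

namespace Multigraph

variable {V E : Type*}

def incidenceFinset [Fintype E] [DecidableEq V] (G : Multigraph V E) (v : V) : Finset E :=
  {e | v ∈ G.ends e}

def addEdge (G : Multigraph V E) {u v : V} (huv : u ≠ v) : Multigraph V (Option E) where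
  ends o := o.elim s(u, v) G.ends
  no_loops := by
    rintro (_ | e)
    · simpa using huv
    · exact G.no_loops e

theorem degree_le_maxDegree [Fintype V] (G : Multigraph V E) (v : V) :
    G.degree v ≤ G.maxDegree :=
  le_sup (f := G.degree) (mem_univ v)

section Degrees

variable [DecidableEq V] (G : Multigraph V E)

theorem sum_card_filter_mem_ends (A : Finset E) (W : Finset V)
    (hW : ∀ e ∈ A, ∀ v ∈ G.ends e, v ∈ W) :
    ∑ v ∈ W, #{e ∈ A | v ∈ G.ends e} = 2 * #A := by
  have := sum_card_bipartiteAbove_eq_sum_card_bipartiteBelow (fun e v => v ∈ G.ends e)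
    (s := A) (t := W)
  simp only [bipartiteAbove, bipartiteBelow] at this
  rw [← this, mul_comm, ← smul_eq_mul, ← sum_const]
  refine sum_congr rfl fun e he => ?_
  rw [← Sym2.card_toFinset_of_not_isDiag _ (G.no_loops e)]
  congr 1
  ext v
  simpa [Sym2.mem_toFinset] using hW e he v

variable [Fintype E]

theorem degree_eq_card_incidenceFinset (v : V) : G.degree v = #(G.incidenceFinset v) := by
  simp [degree, incidenceFinset, ← Set.ncard_coe_finset]

theorem sum_card_incidenceFinset [Fintype V] :
    ∑ v, #(G.incidenceFinset v) = 2 * Fintype.card E :=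
  G.sum_card_filter_mem_ends univ univ fun _ _ v _ => mem_univ v

theorem card_incidenceFinset_addEdge {u v : V} (huv : u ≠ v) (w : V) :
    #((G.addEdge huv).incidenceFinset w) =
      #(G.incidenceFinset w) + if w = u ∨ w = v then 1 else 0 := by
  simp only [incidenceFinset, card_filter, Fintype.sum_option]
  simp only [addEdge, Option.elim, Sym2.mem_iff]
  rw [add_comm]
  congr

theorem two_mul_sum_half_card_incidenceFinset (heven : ∀ v, Even #(G.incidenceFinset v))
    (W : Finset V) :
    2 * ∑ v ∈ W, #(G.incidenceFinset v) / 2 = ∑ v ∈ W, #(G.incidenceFinset v) := by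
  rw [mul_sum]
  exact sum_congr rfl fun v _ => Nat.two_mul_div_two_of_even (heven v)

theorem card_le_sum_half_card_incidenceFinset (heven : ∀ v, Even #(G.incidenceFinset v))
    (A : Finset E) :
    #A ≤ ∑ v ∈ A.biUnion fun e => (G.ends e).toFinset, #(G.incidenceFinset v) / 2 := by
  have h := G.sum_card_filter_mem_ends A (A.biUnion fun e => (G.ends e).toFinset)
    fun e he v hv => mem_biUnion.2 ⟨e, he, Sym2.mem_toFinset.2 hv⟩
  have hle := sum_le_sum fun v (_ : v ∈ A.biUnion fun e => (G.ends e).toFinset) =>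
    card_le_card (filter_subset_filter (fun e => v ∈ G.ends e) (subset_univ A))
  have := G.two_mul_sum_half_card_incidenceFinset heven (A.biUnion fun e => (G.ends e).toFinset)
  simp only [incidenceFinset] at this ⊢
  omega

end Degrees

theorem exists_orientation_of_even_degree [Fintype V] [Fintype E] [DecidableEq V]
    (G : Multigraph V E) (heven : ∀ v, Even #(G.incidenceFinset v)) :
    ∃ hd : E → V, (∀ e, hd e ∈ G.ends e) ∧ ∀ v, #{e | hd e = v} = #(G.incidenceFinset v) / 2 := by
  classical
  -- each vertex offers half its degree many slots; an injective choice of slots fills all of them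
  let slots (e : E) : Finset (Σ _ : V, ℕ) :=
    (G.ends e).toFinset.sigma fun v => range (#(G.incidenceFinset v) / 2)
  have hall (A : Finset E) : #A ≤ #(A.biUnion slots) := by
    refine (G.card_le_sum_half_card_incidenceFinset heven A).trans ?_
    calc _ = #((A.biUnion fun e => (G.ends e).toFinset).sigma
            fun v => range (#(G.incidenceFinset v) / 2)) := by simp [card_sigma]
      _ ≤ _ := card_le_card fun p hp => by
            simp only [slots, mem_sigma, mem_biUnion] at hp ⊢
            obtain ⟨⟨e, he, hpe⟩, hp⟩ := hp
            exact ⟨e, he, hpe, hp⟩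
  obtain ⟨f, hf, hfslot⟩ := (all_card_le_biUnion_card_iff_exists_injective slots).1 hall
  simp only [slots, mem_sigma, Sym2.mem_toFinset, mem_range] at hfslot
  have hle (v : V) : #{e | (f e).1 = v} ≤ #(G.incidenceFinset v) / 2 := by
    simpa using card_le_card_of_injOn (fun e => (f e).2) (t := range (#(G.incidenceFinset v) / 2))
      (fun e he => by simpa [(mem_filter.1 he).2] using (hfslot e).2)
      fun e he e' he' h => hf (Sigma.ext ((mem_filter.1 he).2.trans (mem_filter.1 he').2.symm)
        (heq_of_eq h))
  have hsum : ∑ v, #{e | (f e).1 = v} = ∑ v, #(G.incidenceFinset v) / 2 := by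
    rw [← card_eq_sum_card_fiberwise fun e _ => mem_univ (f e).1, card_univ]
    have := G.two_mul_sum_half_card_incidenceFinset heven univ
    rw [G.sum_card_incidenceFinset] at this
    omega
  exact ⟨fun e => (f e).1, fun e => (hfslot e).1,
    fun v => (sum_eq_sum_iff_of_le fun v _ => hle v).1 hsum v (mem_univ v)⟩

def IsBalancedOrientation [Fintype E] [DecidableEq V] (G : Multigraph V E) (hd : E → V) :
    Prop :=
  (∀ e, hd e ∈ G.ends e) ∧ ∀ v,
    #{e | hd e = v} ≤ (#(G.incidenceFinset v) + 1) / 2 ∧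
    #{e | v ∈ G.ends e ∧ hd e ≠ v} ≤ (#(G.incidenceFinset v) + 1) / 2

section Orientation

variable [Fintype V] [Fintype E] [DecidableEq V] (G : Multigraph V E)

theorem exists_isBalancedOrientation_of_even_degree
    (heven : ∀ v, Even #(G.incidenceFinset v)) : ∃ hd, G.IsBalancedOrientation hd := by
  obtain ⟨hd, hhd, hin⟩ := G.exists_orientation_of_even_degree heven
  refine ⟨hd, hhd, fun v => ?_⟩
  have hsplit := card_filter_add_card_filter_not (s := G.incidenceFinset v)
    (p := fun e => hd e = v)
  have hin' : {e ∈ G.incidenceFinset v | hd e = v} = ({e | hd e = v} : Finset E) := by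
    ext e
    simp only [incidenceFinset, filter_filter, mem_filter, mem_univ, true_and,
      and_iff_right_iff_imp]
    rintro rfl
    exact hhd e
  have hout' : {e ∈ G.incidenceFinset v | ¬hd e = v} =
      ({e | v ∈ G.ends e ∧ hd e ≠ v} : Finset E) := by
    simp only [incidenceFinset, filter_filter]
  rw [hin', hout'] at hsplit
  have := hin v
  have := Nat.two_mul_div_two_of_even (heven v)
  constructor <;> omega

theorem exists_ne_odd_card_incidenceFinset {u : V} (hu : Odd #(G.incidenceFinset u)) :
    ∃ v ≠ u, Odd #(G.incidenceFinset v) := by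
  set O : Finset V := {v | Odd #(G.incidenceFinset v)}
  have huO : u ∈ O := by simpa [O] using hu
  obtain ⟨m, hm⟩ : Even #O :=
    (even_sum_iff_even_card_odd _).1 (G.sum_card_incidenceFinset ▸ even_two_mul _)
  have := card_pos.2 ⟨u, huO⟩
  obtain ⟨v, hvO, hvu⟩ := exists_mem_ne (s := O) (by omega) u
  exact ⟨v, hvu, by simpa [O] using hvO⟩

theorem card_odd_incidenceFinset_addEdge_lt {u v : V} (huv : u ≠ v)
    (hu : Odd #(G.incidenceFinset u)) (hv : Odd #(G.incidenceFinset v)) :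
    #{w | Odd #((G.addEdge huv).incidenceFinset w)} < #{w | Odd #(G.incidenceFinset w)} := by
  refine (card_le_card fun w hw => ?_).trans_lt (card_erase_lt_of_mem (by simpa using hu))
  simp only [mem_filter, mem_univ, true_and, mem_erase] at hw ⊢
  rw [G.card_incidenceFinset_addEdge] at hw
  split_ifs at hw with hwuv
  · obtain ⟨m, hm⟩ := hw
    obtain ⟨m', hm'⟩ : Odd #(G.incidenceFinset w) := by rcases hwuv with rfl | rfl <;> assumption
    omega
  · exact ⟨fun h => hwuv (.inl h), hw⟩

end Orientation

theorem IsBalancedOrientation.of_addEdge [Fintype E] [DecidableEq V] {G : Multigraph V E}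
    {u v : V} {huv : u ≠ v} {hd : Option E → V} (h : (G.addEdge huv).IsBalancedOrientation hd)
    (hu : Odd #(G.incidenceFinset u)) (hv : Odd #(G.incidenceFinset v)) :
    G.IsBalancedOrientation (hd ∘ some) := by
  have hdeg (w : V) :
      (#((G.addEdge huv).incidenceFinset w) + 1) / 2 = (#(G.incidenceFinset w) + 1) / 2 := by
    rw [G.card_incidenceFinset_addEdge]
    split_ifs with hw
    · obtain ⟨m, hm⟩ : Odd #(G.incidenceFinset w) := by rcases hw with rfl | rfl <;> assumption
      omega
    · rfl
  refine ⟨fun e => h.1 (some e), fun w => ?_⟩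
  rw [← hdeg w]
  exact ⟨(card_filter_some_le fun o => hd o = w).trans (h.2 w).1,
    (card_filter_some_le fun o => w ∈ (G.addEdge huv).ends o ∧ hd o ≠ w).trans (h.2 w).2⟩

theorem exists_isBalancedOrientation [Fintype V] [Fintype E] [DecidableEq V]
    (G : Multigraph V E) : ∃ hd, G.IsBalancedOrientation hd := by
  induction hn : #{v | Odd #(G.incidenceFinset v)} using Nat.strong_induction_on generalizing E
    with | _ n ih =>
  by_cases heven : ∀ v, Even #(G.incidenceFinset v)
  · exact G.exists_isBalancedOrientation_of_even_degree heven
  simp only [not_forall, Nat.not_even_iff_odd] at heven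
  obtain ⟨u, hu⟩ := heven
  obtain ⟨v, hvu, hv⟩ := G.exists_ne_odd_card_incidenceFinset hu
  obtain ⟨hd, hhd⟩ := ih _ (hn ▸ G.card_odd_incidenceFinset_addEdge_lt hvu.symm hu hv) _ rfl
  exact ⟨_, hhd.of_addEdge hu hv⟩

section Frugal

variable [Fintype E] [DecidableEq V] {α : Type*} [DecidableEq α] {G : Multigraph V E} {k : ℕ}
  {c : E → α}

theorem isFrugalEdgeColoring_iff_card :
    G.IsFrugalEdgeColoring k c ↔ ∀ v a, #{e | v ∈ G.ends e ∧ c e = a} ≤ k := by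
  simp only [IsFrugalEdgeColoring, ← Set.ncard_coe_finset, coe_filter, mem_univ, true_and]

theorem card_incidenceFinset_le_of_isFrugalEdgeColoring (hc : G.IsFrugalEdgeColoring k c)
    {T : Finset α} (hT : ∀ e, c e ∈ T) (v : V) : #(G.incidenceFinset v) ≤ k * #T := by
  refine (card_le_mul_card_image _ k fun a _ => ?_).trans
    (Nat.mul_le_mul_left k (card_le_card (image_subset_iff.2 fun e _ => hT e)))
  simpa only [incidenceFinset, filter_filter] using isFrugalEdgeColoring_iff_card.1 hc v a

end Frugal

theorem maxDegree_le_of_isFrugalEdgeColoring [Fintype V] [Fintype E] {α : Type*}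
    [DecidableEq α] {G : Multigraph V E} {k : ℕ} {c : E → α} (hc : G.IsFrugalEdgeColoring k c)
    {T : Finset α} (hT : ∀ e, c e ∈ T) : G.maxDegree ≤ k * #T := by
  classical
  exact Finset.sup_le fun v _ => (G.degree_eq_card_incidenceFinset v).trans_le
    (card_incidenceFinset_le_of_isFrugalEdgeColoring hc hT v)

theorem isFrugalEdgeColoring_fst [Fintype E] [DecidableEq V] {β : Type*} [DecidableEq β]
    {G : Multigraph V E} {hd tl : E → V} (hmem : ∀ e v, v ∈ G.ends e ↔ hd e = v ∨ tl e = v)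
    {s : ℕ} {c : E → β × ℕ} (hcs : ∀ e, (c e).2 ∈ range s)
    (hchd : Function.Injective fun e => (hd e, c e))
    (hctl : Function.Injective fun e => (tl e, c e)) :
    G.IsFrugalEdgeColoring (s + s) fun e => (c e).1 := by
  classical
  refine isFrugalEdgeColoring_iff_card.2 fun v a => ?_
  calc #{e | v ∈ G.ends e ∧ (c e).1 = a}
      ≤ #(({e | hd e = v ∧ (c e).1 = a} : Finset E) ∪
          ({e | tl e = v ∧ (c e).1 = a} : Finset E)) :=
        card_le_card fun e he => by
          simp only [mem_filter, mem_univ, true_and, mem_union, hmem] at he ⊢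
          tauto
    _ ≤ #(range s) + #(range s) := (card_union_le _ _).trans
        (add_le_add (card_filter_fst_le hcs hchd v a) (card_filter_fst_le hcs hctl v a))
    _ = s + s := by rw [card_range]

theorem exists_frugal_list_coloring [Fintype V] [Fintype E] {β : Type*} [DecidableEq β]
    [Nonempty β] (G : Multigraph V E) {k t : ℕ} (hk : Even k) (hΔ : G.maxDegree ≤ k * t)
    (L : E → Finset β) (hL : ∀ e, t ≤ #(L e)) :
    ∃ c : E → β, (∀ e, c e ∈ L e) ∧ G.IsFrugalEdgeColoring k c := by
  classical
  obtain ⟨s, rfl⟩ := hk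
  obtain ⟨hd, hhd, hbal⟩ := G.exists_isBalancedOrientation
  -- split every vertex into a head copy and a tail copy: the result is bipartite
  let tl (e : E) : V := Sym2.Mem.other (hhd e)
  have hmem (e : E) (v : V) : v ∈ G.ends e ↔ hd e = v ∨ tl e = v := by
    rw [← Sym2.other_spec (hhd e), Sym2.mem_iff, eq_comm, @eq_comm _ v]
  have htl (e : E) : tl e ≠ hd e := fun h =>
    G.no_loops e (Sym2.other_spec (hhd e) ▸ Sym2.mk_isDiag_iff.2 h.symm)
  have hhalf (v : V) : (#(G.incidenceFinset v) + 1) / 2 ≤ s * t := by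
    have := (G.degree_eq_card_incidenceFinset v).symm.trans_le
      ((G.degree_le_maxDegree v).trans hΔ)
    rw [add_mul] at this
    omega
  have hin (v : V) : #{e | hd e = v} ≤ s * t := (hbal v).1.trans (hhalf v)
  have hout (v : V) : #{e | tl e = v} ≤ s * t := by
    refine (card_le_card fun e he => ?_).trans ((hbal v).2.trans (hhalf v))
    simp only [mem_filter, mem_univ, true_and] at he ⊢
    exact ⟨(hmem e v).2 (.inr he), he ▸ (htl e).symm⟩
  obtain ⟨c, hcL, hctl, hchd⟩ := exists_list_edge_coloring hout hin
    (fun e => L e ×ˢ range s) fun e => by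
      rw [card_product, card_range, mul_comm s t]
      exact Nat.mul_le_mul_right s (hL e)
  exact ⟨fun e => (c e).1, fun e => (mem_product.1 (hcL e)).1,
    isFrugalEdgeColoring_fst hmem (fun e => (mem_product.1 (hcL e)).2) hchd hctl⟩

end Multigraph

/-- For a finite multigraph `G` and an even positive integer `k`,
`χ'_k(G) = ch'_k(G) = ⌈Δ(G)/k⌉` (ceiling written `(Δ + k - 1)/k`). -/
theorem frugal_edge_even {V E : Type*} [Fintype V] [Fintype E] (G : Multigraph V E)
    (k : ℕ) (hk : 0 < k) (hke : Even k) :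
    G.frugalChromaticIndex k = (G.maxDegree + k - 1) / k ∧
    G.frugalEdgeChoiceNumber k = (G.maxDegree + k - 1) / k := by
  set t := (G.maxDegree + k - 1) / k
  have hΔ : G.maxDegree ≤ k * t := (ceilDiv_le_iff_le_mul hk).1 le_rfl
  have hlower {β : Type} [DecidableEq β] {c : E → β} {T : Finset β} (hT : ∀ e, c e ∈ T)
      (hc : G.IsFrugalEdgeColoring k c) : t ≤ #T :=
    (ceilDiv_le_iff_le_mul hk).2 (G.maxDegree_le_of_isFrugalEdgeColoring hc hT)
  refine ⟨IsLeast.csInf_eq ⟨?_, ?_⟩, IsLeast.csInf_eq ⟨?_, ?_⟩⟩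
  · obtain ⟨c, hc, hfrugal⟩ := G.exists_frugal_list_coloring hke hΔ (fun _ => range t) (by simp)
    exact ⟨c, fun e => mem_range.1 (hc e), hfrugal⟩
  · rintro n ⟨c, hc, hfrugal⟩
    simpa using hlower (T := range n) (fun e => mem_range.2 (hc e)) hfrugal
  · exact fun L hL => G.exists_frugal_list_coloring hke hΔ L fun e => (hL e).ge
  · intro n hn
    obtain ⟨c, hc, hfrugal⟩ := hn (fun _ => Ico 0 (n : ℤ)) (by simp)
    simpa using hlower hc hfrugal
end

section
/- For integers m ≥ 1 and ℓ ≥ 0, let T^(m) be the multigraph with three vertices and exactly m parallel edges between each pair of distinct vertices, and let k = 2ℓ + 1. Then in any k-frugal edge colouring of T^(m) each colour is used on at most 3ℓ + 1 edges, and consequently χ'_k(T^(m)) = ⌈3m/(3ℓ + 1)⌉ = ⌈3·Δ(T^(m))/(3k − 1)⌉, where Δ(T^(m)) = 2m. -/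
open SimpleGraph

/-- `TripleMultigraph m`: the multigraph `T^(m)` with three vertices and exactly `m`
parallel edges between each pair of distinct vertices. -/
def TripleMultigraph (m : ℕ) : Multigraph (Fin 3) (Fin 3 × Fin m) where
  ends := fun p => s(p.1 + 1, p.1 + 2)
  no_loops := by
    rintro ⟨i, j⟩
    rw [Sym2.mk_isDiag_iff]
    exact (by decide : ∀ i : Fin 3, ¬ i + 1 = i + 2) i

/-! A colour class with `x` edges has `2x` incidences with the three vertices, and `k`-frugality
allows at most `k = 2ℓ + 1` of them at each vertex, so `x ≤ 3ℓ + 1`; hence at least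
`⌈3m / (3ℓ + 1)⌉` colours are needed. Conversely, number the edges `0, …, 3m - 1` so that
edge `t` avoids vertex `t % 3`, and give each run of `3ℓ + 1` consecutive edges its own colour:
such a run contains at least `ℓ` edges avoiding any given vertex, hence at most `2ℓ + 1` edges
at it. -/

open Finset

theorem card_Ico_filter_mod_three_ne_le (L ℓ : ℕ) {r : ℕ} (hr : r < 3) :
    #{t ∈ Ico L (L + (3 * ℓ + 1)) | t % 3 ≠ r} ≤ 2 * ℓ + 1 := by
  have hresidue : ℓ ≤ #{t ∈ Ico L (L + (3 * ℓ + 1)) | t % 3 = r} := by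
    -- `L + (r + 2 * L) % 3` is the least `t ≥ L` with `t % 3 = r`
    simpa using card_le_card_of_injOn (s := range ℓ) (fun u => L + (r + 2 * L) % 3 + 3 * u)
      (fun u hu => by
        simp only [coe_range, Set.mem_Iio] at hu
        simp only [coe_filter, mem_Ico, Set.mem_ofPred_eq]
        omega)
      (fun u _ v _ h => by simp only at h; omega)
  have hsplit := card_filter_add_card_filter_not (s := Ico L (L + (3 * ℓ + 1))) (· % 3 = r)
  rw [Nat.card_Ico] at hsplit
  simp only [ne_eq]
  omega

theorem Nat.mul_ceilDiv_mul_left (a b : ℕ) {c : ℕ} (hc : 0 < c) :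
    (c * a) ⌈/⌉ (c * b) = a ⌈/⌉ b := by
  rcases Nat.eq_zero_or_pos b with rfl | hb
  · simp
  refine eq_of_forall_ge_iff fun n => ?_
  rw [ceilDiv_le_iff_le_mul (Nat.mul_pos hc hb), ceilDiv_le_iff_le_mul hb, mul_assoc,
    Nat.mul_le_mul_left_iff hc]

namespace Multigraph

variable {V E : Type*} (G : Multigraph V E)

theorem sum_ncard_incident_eq [Fintype V] [Finite E] (P : E → Prop) :
    ∑ v, {e | v ∈ G.ends e ∧ P e}.ncard = 2 * {e | P e}.ncard := by
  classical
  have := Fintype.ofFinite E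
  simp only [Set.ncard_eq_toFinset_card', Set.toFinset_ofPred]
  have hdouble := sum_card_bipartiteAbove_eq_sum_card_bipartiteBelow
    (s := (univ : Finset V)) (t := ({e | P e} : Finset E)) (r := fun v e => v ∈ G.ends e)
  have hbelow (e : E) : #((univ : Finset V).bipartiteBelow (fun v e => v ∈ G.ends e) e) = 2 := by
    rw [← Sym2.card_toFinset_of_not_isDiag _ (G.no_loops e)]
    congr 1
    ext v
    simp
  simp only [bipartiteAbove, filter_filter, hbelow, sum_const, smul_eq_mul] at hdouble
  simpa only [and_comm, mul_comm] using hdouble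

variable {G} {k : ℕ} {α : Type*} {c : E → α}

theorem IsFrugalEdgeColoring.two_mul_ncard_le [Fintype V] [Finite E]
    (hc : G.IsFrugalEdgeColoring k c) (a : α) :
    2 * {e | c e = a}.ncard ≤ Fintype.card V * k := by
  rw [← G.sum_ncard_incident_eq]
  simpa using Finset.sum_le_card_nsmul univ _ k fun v _ => hc v a

theorem frugalChromaticIndex_le {n : ℕ} {c : E → ℕ} (hlt : ∀ e, c e < n)
    (hc : G.IsFrugalEdgeColoring k c) : G.frugalChromaticIndex k ≤ n :=
  Nat.sInf_le ⟨c, hlt, hc⟩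

theorem card_le_mul_frugalChromaticIndex [Fintype E] {b n : ℕ} {c : E → ℕ}
    (hlt : ∀ e, c e < n) (hc : G.IsFrugalEdgeColoring k c)
    (hb : ∀ c : E → ℕ, G.IsFrugalEdgeColoring k c → ∀ a, {e | c e = a}.ncard ≤ b) :
    Fintype.card E ≤ b * G.frugalChromaticIndex k := by
  classical
  obtain ⟨c₀, hlt₀, hc₀⟩ := Nat.sInf_mem
    (s := {n | ∃ c : E → ℕ, (∀ e, c e < n) ∧ G.IsFrugalEdgeColoring k c})
    ⟨n, c, hlt, hc⟩
  simpa using card_le_mul_card_image_of_maps_to (s := univ)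
    (t := range (G.frugalChromaticIndex k)) (fun e _ => mem_range.2 (hlt₀ e)) b
    fun a _ => by simpa [Set.ncard_eq_toFinset_card'] using hb c₀ hc₀ a

end Multigraph

namespace TripleMultigraph

variable {m : ℕ}

theorem mem_ends_iff (v : Fin 3) (e : Fin 3 × Fin m) :
    v ∈ (TripleMultigraph m).ends e ↔ e.1 ≠ v := by
  change v ∈ s(e.1 + 1, e.1 + 2) ↔ e.1 ≠ v
  rw [Sym2.mem_iff]
  exact (by decide : ∀ i v : Fin 3, v = i + 1 ∨ v = i + 2 ↔ i ≠ v) e.1 v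

theorem degree_eq (v : Fin 3) : (TripleMultigraph m).degree v = 2 * m := by
  have hcard : #{i : Fin 3 | i ≠ v} = 2 := by revert v; decide
  simp only [Multigraph.degree, mem_ends_iff, Set.ncard_eq_toFinset_card', Set.toFinset_ofPred]
  rw [← univ_product_univ, filter_product_left (· ≠ v), card_product, hcard, card_univ,
    Fintype.card_fin]

theorem maxDegree_eq : (TripleMultigraph m).maxDegree = 2 * m := by
  simp only [Multigraph.maxDegree, degree_eq]
  exact sup_const univ_nonempty _

theorem ncard_colorClass_le {ℓ : ℕ} {c : Fin 3 × Fin m → ℕ}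
    (hc : (TripleMultigraph m).IsFrugalEdgeColoring (2 * ℓ + 1) c) (a : ℕ) :
    {e | c e = a}.ncard ≤ 3 * ℓ + 1 := by
  have := hc.two_mul_ncard_le a
  rw [Fintype.card_fin] at this
  omega

def blockColoring (b : ℕ) (e : Fin 3 × Fin m) : ℕ := (3 * e.2 + e.1) / b

theorem blockColoring_lt {b : ℕ} (hb : 0 < b) (e : Fin 3 × Fin m) :
    blockColoring b e < 3 * m ⌈/⌉ b := by
  have hceil : 3 * m ≤ b * (3 * m ⌈/⌉ b) := le_smul_ceilDiv hb
  rw [blockColoring, Nat.div_lt_iff_lt_mul hb]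
  have := e.1.isLt
  have := e.2.isLt
  nlinarith

theorem isFrugalEdgeColoring_blockColoring (ℓ : ℕ) :
    (TripleMultigraph m).IsFrugalEdgeColoring (2 * ℓ + 1) (blockColoring (3 * ℓ + 1)) := by
  intro v a
  simp only [mem_ends_iff, blockColoring, Set.ncard_eq_toFinset_card', Set.toFinset_ofPred]
  refine (card_le_card_of_injOn (fun e => 3 * e.2.val + e.1.val) ?_ ?_).trans
    (card_Ico_filter_mod_three_ne_le (a * (3 * ℓ + 1)) ℓ v.isLt)
  · rintro ⟨i, j⟩ he
    simp only [coe_filter, mem_univ, true_and, Set.mem_ofPred_eq,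
      Nat.div_eq_iff (by omega : 0 < 3 * ℓ + 1)] at he
    simp only [coe_filter, mem_Ico, Set.mem_ofPred_eq]
    have := i.isLt
    have := Fin.val_ne_of_ne he.1
    omega
  · rintro ⟨i₁, j₁⟩ - ⟨i₂, j₂⟩ - h
    have := i₁.isLt
    have := i₂.isLt
    simp only at h
    ext <;> simp only <;> omega

theorem frugalChromaticIndex_eq (m ℓ : ℕ) :
    (TripleMultigraph m).frugalChromaticIndex (2 * ℓ + 1) = 3 * m ⌈/⌉ (3 * ℓ + 1) := by
  have hb : 0 < 3 * ℓ + 1 := by omega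
  have hlt := blockColoring_lt hb (m := m)
  have hc := isFrugalEdgeColoring_blockColoring (m := m) ℓ
  refine le_antisymm (Multigraph.frugalChromaticIndex_le hlt hc) ?_
  rw [ceilDiv_le_iff_le_mul hb]
  simpa using (TripleMultigraph m).card_le_mul_frugalChromaticIndex hlt hc
    fun _ => ncard_colorClass_le

end TripleMultigraph

theorem frugal_edge_triple_general (m ℓ k : ℕ) (hk : k = 2 * ℓ + 1) :
    (∀ c : Fin 3 × Fin m → ℕ, (TripleMultigraph m).IsFrugalEdgeColoring k c →
        ∀ a : ℕ, {e : Fin 3 × Fin m | c e = a}.ncard ≤ 3 * ℓ + 1) ∧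
    (TripleMultigraph m).maxDegree = 2 * m ∧
    (TripleMultigraph m).frugalChromaticIndex k
        = (3 * m + (3 * ℓ + 1) - 1) / (3 * ℓ + 1) ∧
    (3 * m + (3 * ℓ + 1) - 1) / (3 * ℓ + 1)
        = (3 * (TripleMultigraph m).maxDegree + (3 * k - 1) - 1) / (3 * k - 1) := by
  subst hk
  refine ⟨fun _ => TripleMultigraph.ncard_colorClass_le, TripleMultigraph.maxDegree_eq,
    TripleMultigraph.frugalChromaticIndex_eq m ℓ, ?_⟩
  rw [TripleMultigraph.maxDegree_eq, ← Nat.ceilDiv_eq_add_pred_div,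
    ← Nat.ceilDiv_eq_add_pred_div, show 3 * (2 * m) = 2 * (3 * m) by ring,
    show 3 * (2 * ℓ + 1) - 1 = 2 * (3 * ℓ + 1) by omega,
    Nat.mul_ceilDiv_mul_left _ _ two_pos]

/-- For `m ≥ 1`, `ℓ ≥ 0` and `k = 2ℓ + 1`: in any `k`-frugal edge colouring of `T^(m)`
each colour is used on at most `3ℓ + 1` edges; `Δ(T^(m)) = 2m`; and
`χ'_k(T^(m)) = ⌈3m/(3ℓ + 1)⌉ = ⌈3Δ(T^(m))/(3k - 1)⌉`
(ceilings written `(a + b - 1)/b`). -/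
theorem frugal_edge_triple (m ℓ k : ℕ) (hm : 1 ≤ m) (hk : k = 2 * ℓ + 1) :
    (∀ c : Fin 3 × Fin m → ℕ, (TripleMultigraph m).IsFrugalEdgeColoring k c →
        ∀ a : ℕ, {e : Fin 3 × Fin m | c e = a}.ncard ≤ 3 * ℓ + 1) ∧
    (TripleMultigraph m).maxDegree = 2 * m ∧
    (TripleMultigraph m).frugalChromaticIndex k
        = (3 * m + (3 * ℓ + 1) - 1) / (3 * ℓ + 1) ∧
    (3 * m + (3 * ℓ + 1) - 1) / (3 * ℓ + 1)
        = (3 * (TripleMultigraph m).maxDegree + (3 * k - 1) - 1) / (3 * k - 1) :=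
  frugal_edge_triple_general m ℓ k hk
end
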